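/- arXiv:1706.04477 — 3 statements merged into one kernel-verified Lean document; each statement's English description precedes it below -/
import Mathlib

section
/- For any bound quiver algebra A = KQ/I over a field K, and for any relation μ = Σ_r c_r μ_r lying in the ideal I (where each μ_r is a path in Q of length ≥ 2 from a common source to a common target), the element π(μ) = Σ_r c_r π(μ_r) lies in the kernel of the bimodule homomorphism d_1 : P_1 → P_0. Here P_0 = ⊕_{i∈Q_0} Ae_i ⊗ e_iA, P_1 = ⊕_{α∈Q_1} Ae_{s(α)} ⊗ e_{t(α)}A, d_1(e_{s(α)} ⊗ e_{t(α)}) = α ⊗ e_{t(α)} − e_{s(α)} ⊗ α, and π(α_1α_2⋯α_m) = Σ_{k=1}^m α_1⋯α_{k−1} ⊗ α_{k+1}⋯α_m (with α_0 = e_{s(α_1)}, α_{m+1} = e_{t(α_m)}). -/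
open scoped TensorProduct

namespace BoundQuiver

variable (K : Type) [Field K] (A : Type) [Ring A] [Algebra K A]
variable {Q0 Q1 : Type}

/-- Product in `A` of the images of the arrows of a path (read left to right). -/
def prodA (av : Q1 → A) (l : List Q1) : A := (l.map av).prod

/-- `IsPath s t i j l`: the list of arrows `l` is a composable path from vertex `i`
to vertex `j` in the quiver with source and target maps `s`, `t`. -/
def IsPath (s t : Q1 → Q0) (i j : Q0) (l : List Q1) : Prop :=
  l ≠ [] ∧ l.Chain' (fun x y => t x = s y) ∧
    (∀ h : l ≠ [], s (l.head h) = i ∧ t (l.getLast h) = j)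

variable [DecidableEq Q1]

/-- The map `π` on paths: `π(α₁⋯α_m) = Σ_k α₁⋯α_{k−1} ⊗ α_{k+1}⋯α_m`
(with `α₀ = e_{s(α₁)}`, `α_{m+1} = e_{t(α_m)}`), viewed as an element of
`P₁ = ⊕_{α ∈ Q₁} Ae_{s(α)} ⊗ e_{t(α)}A`, modelled as a `Q1`-indexed family in
`A ⊗[K] A`. -/
noncomputable def piP (s t : Q1 → Q0) (ev : Q0 → A) (av : Q1 → A) : List Q1 → Q1 → A ⊗[K] A
  | [], _ => 0
  | x :: l, b =>
      (if b = x then ev (s x) ⊗ₜ[K] (ev (t x) * prodA A av l) else 0) +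
        TensorProduct.map (LinearMap.mulLeft K (av x)) LinearMap.id
          (piP s t ev av l b)

variable [DecidableEq Q0] [Fintype Q1]

/-- The differential `d₁ : P₁ → P₀`, determined on the generator
`e_{s(α)} ⊗ e_{t(α)}` of the summand of `P₁` indexed by the arrow `α` by
`d₁(e_{s(α)} ⊗ e_{t(α)}) = α ⊗ e_{t(α)} − e_{s(α)} ⊗ α`; here
`P₀ = ⊕_{i ∈ Q0} Ae_i ⊗ e_iA` is modelled as a `Q0`-indexed family in `A ⊗[K] A`. -/
noncomputable def d1 (s t : Q1 → Q0) (av : Q1 → A) (p : Q1 → A ⊗[K] A) : Q0 → A ⊗[K] A :=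
  fun i =>
    (∑ α : Q1, if t α = i then
        TensorProduct.map (LinearMap.mulRight K (av α)) LinearMap.id (p α) else 0) -
    (∑ α : Q1, if s α = i then
        TensorProduct.map LinearMap.id (LinearMap.mulLeft K (av α)) (p α) else 0)

end BoundQuiver

/-!
`π` of a path `α₁⋯α_m` from `i` to `j` satisfies `d₁(π(α₁⋯α_m)) = α₁⋯α_m ⊗ e_j − e_i ⊗ α₁⋯α_m`
in `P₀`: by induction on `m`, writing `π(α₁⋯α_m) = e_i ⊗ α₂⋯α_m + α₁·π(α₂⋯α_m)`, the left
`A`-linearity of `d₁` and the boundary of the tail, the two terms `α₁ ⊗ α₂⋯α_m` at the vertex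
`t(α₁)` cancel. The right-hand side is `K`-linear in the image `α₁⋯α_m ∈ A` of the path, so for a
relation `μ = Σ c_r μ_r` between parallel paths, `d₁(π(μ))` only depends on the image of `μ`
in `A`, which is `0`.
-/

theorem IsIdempotentElem.mul_left_eq_self_of_mul_mul_eq {R : Type*} [Semigroup R] {e f a : R}
    (he : IsIdempotentElem e) (h : e * a * f = a) : e * a = a := by
  rw [← h, ← mul_assoc, ← mul_assoc, he.eq]

theorem IsIdempotentElem.mul_right_eq_self_of_mul_mul_eq {R : Type*} [Semigroup R] {e f a : R}
    (hf : IsIdempotentElem f) (h : e * a * f = a) : a * f = a := by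
  rw [← h, mul_assoc, hf.eq]

namespace BoundQuiver

open TensorProduct

section IsPath

variable {Q0 Q1 : Type} {s t : Q1 → Q0} {i j : Q0}

theorem IsPath.ne_nil {l : List Q1} (h : IsPath s t i j l) : l ≠ [] := h.1

theorem IsPath.of_singleton {x : Q1} (h : IsPath s t i j [x]) : s x = i ∧ t x = j :=
  h.2.2 (List.cons_ne_nil x [])

theorem IsPath.source_eq {x : Q1} {l : List Q1} (h : IsPath s t i j (x :: l)) : s x = i :=
  (h.2.2 (List.cons_ne_nil x l)).1

theorem IsPath.tail {x y : Q1} {l : List Q1} (h : IsPath s t i j (x :: y :: l)) :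
    IsPath s t (t x) j (y :: l) := by
  obtain ⟨-, hchain, hends⟩ := h
  obtain ⟨hxy, hchain'⟩ := List.isChain_cons_cons.1 hchain
  exact ⟨List.cons_ne_nil y l, hchain', fun _ => ⟨hxy.symm, (hends (List.cons_ne_nil x _)).2⟩⟩

end IsPath

variable (K : Type) [Field K] (A : Type) [Ring A] [Algebra K A] {Q0 Q1 : Type}

theorem prodA_nil (av : Q1 → A) : prodA A av [] = 1 := rfl

theorem prodA_cons (av : Q1 → A) (x : Q1) (l : List Q1) :
    prodA A av (x :: l) = av x * prodA A av l := List.prod_cons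

theorem piP_cons [DecidableEq Q1] (s t : Q1 → Q0) (ev : Q0 → A) (av : Q1 → A) (x : Q1)
    (l : List Q1) :
    piP K A s t ev av (x :: l) =
      Pi.single x (ev (s x) ⊗ₜ (ev (t x) * prodA A av l)) +
        fun b => map (LinearMap.mulLeft K (av x)) LinearMap.id (piP K A s t ev av l b) := by
  ext b
  simp [piP, Pi.single_apply]

variable [DecidableEq Q0]

noncomputable def pathBoundary (ev : Q0 → A) (i j : Q0) : A →ₗ[K] Q0 → A ⊗[K] A :=
  LinearMap.single K (fun _ => A ⊗[K] A) j ∘ₗ (TensorProduct.mk K A A).flip (ev j) -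
    LinearMap.single K (fun _ => A ⊗[K] A) i ∘ₗ TensorProduct.mk K A A (ev i)

theorem pathBoundary_apply (ev : Q0 → A) (i j : Q0) (a : A) :
    pathBoundary K A ev i j a = Pi.single j (a ⊗ₜ ev j) - Pi.single i (ev i ⊗ₜ a) := rfl

section d1

variable [Fintype Q1] (s t : Q1 → Q0) (av : Q1 → A)

noncomputable def d1Linear : (Q1 → A ⊗[K] A) →ₗ[K] Q0 → A ⊗[K] A where
  toFun := d1 K A s t av
  map_add' p q := by
    ext v
    simp only [d1, Pi.add_apply, map_add, ite_add_zero, Finset.sum_add_distrib]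
    abel
  map_smul' c p := by
    ext v
    simp [d1, Finset.smul_sum, smul_sub, apply_ite]

theorem d1Linear_apply (p : Q1 → A ⊗[K] A) : d1Linear K A s t av p = d1 K A s t av p := rfl

theorem d1_add (p q : Q1 → A ⊗[K] A) :
    d1 K A s t av (p + q) = d1 K A s t av p + d1 K A s t av q :=
  map_add (d1Linear K A s t av) p q

theorem d1_map_mulLeft (a : A) (p : Q1 → A ⊗[K] A) :
    d1 K A s t av (fun b => map (LinearMap.mulLeft K a) LinearMap.id (p b)) =
      fun v => map (LinearMap.mulLeft K a) LinearMap.id (d1 K A s t av p v) := by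
  ext v
  simp only [d1, map_sub, map_sum, apply_ite, map_zero, map_map, LinearMap.comp_id,
    LinearMap.id_comp]
  simp only [← Module.End.mul_eq_comp, (LinearMap.commute_mulLeft_right _ _).eq]

variable [DecidableEq Q1]

theorem d1_single (x : Q1) (X : A ⊗[K] A) :
    d1 K A s t av (Pi.single x X) =
      Pi.single (t x) (map (LinearMap.mulRight K (av x)) LinearMap.id X) -
        Pi.single (s x) (map LinearMap.id (LinearMap.mulLeft K (av x)) X) := by
  ext v
  simp only [d1, Pi.sub_apply]
  rw [Fintype.sum_eq_single x, Fintype.sum_eq_single x] <;>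
    simp +contextual [Pi.single_apply, eq_comm]

theorem d1_piP (ev : Q0 → A) (hL : ∀ α, ev (s α) * av α = av α)
    (hR : ∀ α, av α * ev (t α) = av α) {i j : Q0} {l : List Q1} (hl : IsPath s t i j l) :
    d1 K A s t av (piP K A s t ev av l) = pathBoundary K A ev i j (prodA A av l) := by
  induction l generalizing i with
  | nil => exact absurd rfl hl.ne_nil
  | cons x l ih =>
    rcases l with _ | ⟨y, l⟩
    · obtain ⟨rfl, rfl⟩ := hl.of_singleton
      have hπ : piP K A s t ev av [x] = Pi.single x (ev (s x) ⊗ₜ ev (t x)) := by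
        ext b
        simp [piP, prodA_nil, Pi.single_apply]
      rw [hπ, d1_single, pathBoundary_apply]
      simp [prodA_cons, prodA_nil, hL, hR]
    · obtain rfl := hl.source_eq
      have hprod : ev (t x) * prodA A av (y :: l) = prodA A av (y :: l) := by
        rw [prodA_cons, ← mul_assoc, ← hl.tail.source_eq, hL]
      rw [piP_cons, hprod, d1_add, d1_single, d1_map_mulLeft, ih hl.tail]
      ext v
      simp [pathBoundary_apply, prodA_cons A av x (y :: l), hL, hR,
        LinearMap.apply_single (fun _ => map (LinearMap.mulLeft K (av x)) LinearMap.id)]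

end d1

end BoundQuiver

open BoundQuiver in
theorem d1_pi_relation_eq_zero_general (K : Type) [Field K] (A : Type) [Ring A] [Algebra K A]
    {Q0 Q1 : Type} [DecidableEq Q0] [DecidableEq Q1] [Fintype Q1]
    (s t : Q1 → Q0) (ev : Q0 → A) (av : Q1 → A)
    (hidem : ∀ i j : Q0, ev i * ev j = if i = j then ev i else 0)
    (harr : ∀ α : Q1, ev (s α) * av α * ev (t α) = av α)
    (n : ℕ) (c : Fin n → K) (p : Fin n → List Q1) (i₀ j₀ : Q0)
    (hpath : ∀ r, IsPath s t i₀ j₀ (p r) ∧ 2 ≤ (p r).length)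
    (hrel : ∑ r, c r • prodA A av (p r) = 0) :
    ∀ v : Q0,
      d1 K A s t av (fun b => ∑ r, c r • piP K A s t ev av (p r) b) v = 0 := by
  have he : ∀ i, IsIdempotentElem (ev i) := fun i => by
    simpa [IsIdempotentElem] using hidem i i
  have hL : ∀ α, ev (s α) * av α = av α := fun α =>
    (he _).mul_left_eq_self_of_mul_mul_eq (harr α)
  have hR : ∀ α, av α * ev (t α) = av α := fun α =>
    (he _).mul_right_eq_self_of_mul_mul_eq (harr α)
  suffices d1Linear K A s t av (∑ r, c r • piP K A s t ev av (p r)) = 0 by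
    simpa [d1Linear_apply, Finset.sum_fn] using congrFun this
  calc d1Linear K A s t av (∑ r, c r • piP K A s t ev av (p r))
      = ∑ r, c r • pathBoundary K A ev i₀ j₀ (prodA A av (p r)) := by
        simp only [map_sum, map_smul, d1Linear_apply, d1_piP K A s t av ev hL hR (hpath _).1]
    _ = pathBoundary K A ev i₀ j₀ (∑ r, c r • prodA A av (p r)) := by
        simp only [map_sum, map_smul]
    _ = 0 := by rw [hrel, map_zero]

open BoundQuiver in
/-- For a bound quiver algebra `A = KQ/I` (given by orthogonal idempotents `ev i`
summing to `1` and arrow images `av α` with `e_{s(α)}·α·e_{t(α)} = α`), and for any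
relation `μ = Σ_r c_r μ_r` lying in `I` (the `μ_r` being paths of length `≥ 2` from a
common source `i₀` to a common target `j₀`, and `μ` having image `0` in `A`), the
element `π(μ) = Σ_r c_r π(μ_r)` lies in the kernel of `d₁ : P₁ → P₀`. -/
theorem d1_pi_relation_eq_zero (K : Type) [Field K] (A : Type) [Ring A] [Algebra K A]
    {Q0 Q1 : Type} [DecidableEq Q0] [DecidableEq Q1] [Fintype Q0] [Fintype Q1]
    (s t : Q1 → Q0) (ev : Q0 → A) (av : Q1 → A)
    (hidem : ∀ i j : Q0, ev i * ev j = if i = j then ev i else 0)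
    (hsum : ∑ i : Q0, ev i = 1)
    (harr : ∀ α : Q1, ev (s α) * av α * ev (t α) = av α)
    (n : ℕ) (c : Fin n → K) (p : Fin n → List Q1) (i₀ j₀ : Q0)
    (hpath : ∀ r, IsPath s t i₀ j₀ (p r) ∧ 2 ≤ (p r).length)
    (hrel : ∑ r, c r • prodA A av (p r) = 0) :
    ∀ v : Q0,
      d1 K A s t av (fun b => ∑ r, c r • piP K A s t ev av (p r) b) v = 0 :=
  d1_pi_relation_eq_zero_general K A s t ev av hidem harr n c p i₀ j₀ hpath hrel
end

section
/- Let Λ = Λ(m,λ) be a higher tetrahedral algebra. The assignment on vertices given by the permutation (5 4 2)(1 6 3) and on arrows by (δ ω σ)(η β ε)(γ ρ ξ)(ν μ α) extends to a K-algebra automorphism φ of Λ of order 3. -/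
open scoped TensorProduct

namespace HigherTetrahedral

/-- The twelve arrows of the tetrahedral triangulation quiver. -/
inductive Arr : Type
  | nu | de | ep | rh | si | al | ga | be | xi | et | om | mu
  deriving DecidableEq

open Arr

instance : Fintype Arr where
  elems := {nu, de, ep, rh, si, al, ga, be, xi, et, om, mu}
  complete := fun x => by cases x <;> decide

/-- Source vertex of each arrow (vertex `v` is `⟨v-1⟩ : Fin 6`). -/
def src : Arr → Fin 6
  | nu => 0 | de => 0 | ep => 1 | rh => 1 | si => 2 | al => 2
  | ga => 3 | be => 3 | xi => 4 | et => 4 | om => 5 | mu => 5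

/-- Target vertex of each arrow. -/
def tgt : Arr → Fin 6
  | nu => 5 | de => 4 | ep => 4 | rh => 5 | si => 1 | al => 0
  | ga => 0 | be => 1 | xi => 2 | et => 3 | om => 3 | mu => 2

/-- The permutation `f` of arrows, with orbits (δ η γ), (ε ξ σ), (ρ ω β), (ν μ α). -/
def f : Arr → Arr
  | de => et | et => ga | ga => de
  | ep => xi | xi => si | si => ep
  | rh => om | om => be | be => rh
  | nu => mu | mu => al | al => nu

/-- The permutation `g`: `g θ` is the arrow starting at `tgt θ` other than `f θ`. -/
def g : Arr → Arr
  | de => xi | et => be | ga => nu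
  | ep => et | xi => al | si => rh
  | rh => mu | om => ga | be => ep
  | nu => om | mu => si | al => de

variable (K : Type) [Field K]

/-- The ambient free algebra on the vertices and arrows. -/
abbrev FreeTet := FreeAlgebra K ((Fin 6) ⊕ Arr)

/-- Generator corresponding to a vertex. -/
def V (i : Fin 6) : FreeTet K := FreeAlgebra.ι K (Sum.inl i)

/-- Generator corresponding to an arrow. -/
def A (θ : Arr) : FreeTet K := FreeAlgebra.ι K (Sum.inr θ)

variable (m : ℕ) (lam : K)

/-- The defining relations of the higher tetrahedral algebra `Λ(m,λ)`, together with
the path-algebra relations for the vertex idempotents. -/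
inductive TetRel : FreeTet K → FreeTet K → Prop
  | idem (i j : Fin 6) : TetRel (V K i * V K j) (if i = j then V K i else 0)
  | sum_one : TetRel (∑ i : Fin 6, V K i) 1
  | src_tgt (θ : Arr) : TetRel (V K (src θ) * A K θ * V K (tgt θ)) (A K θ)
  | rel_ga : TetRel (A K ga * A K de)
      (A K be * A K ep + lam • ((A K be * A K rh * A K om) ^ (m - 1) * (A K be * A K ep)))
  | rel_rh : TetRel (A K rh * A K om)
      (A K ep * A K et + lam • ((A K ep * A K xi * A K si) ^ (m - 1) * (A K ep * A K et)))
  | rel_xi : TetRel (A K xi * A K si)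
      (A K et * A K be + lam • ((A K et * A K ga * A K de) ^ (m - 1) * (A K et * A K be)))
  | rel_de : TetRel (A K de * A K et) (A K nu * A K om)
  | rel_om : TetRel (A K om * A K be) (A K mu * A K si)
  | rel_si : TetRel (A K si * A K ep) (A K al * A K de)
  | rel_et : TetRel (A K et * A K ga) (A K xi * A K al)
  | rel_be : TetRel (A K be * A K rh) (A K ga * A K nu)
  | rel_ep : TetRel (A K ep * A K xi) (A K rh * A K mu)
  | rel_nu : TetRel (A K nu * A K mu) (A K de * A K xi)
  | rel_mu : TetRel (A K mu * A K al) (A K om * A K ga)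
  | rel_al : TetRel (A K al * A K nu) (A K si * A K rh)
  | zero_rel (θ : Arr) : TetRel
      ((A K θ * A K (f θ) * A K (f (f θ))) ^ (m - 1) * (A K θ * A K (f θ)) * A K (g (f θ))) 0

/-- The higher tetrahedral algebra `Λ(m,λ)`. -/
abbrev Tet := RingQuot (TetRel K m lam)

/-- The idempotent of `Λ(m,λ)` at a vertex. -/
def e (i : Fin 6) : Tet K m lam := RingQuot.mkAlgHom K (TetRel K m lam) (V K i)

/-- The image in `Λ(m,λ)` of an arrow. -/
def a (θ : Arr) : Tet K m lam := RingQuot.mkAlgHom K (TetRel K m lam) (A K θ)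

/-- The elements `X_i` (vertex `i+1` in the paper's numbering):
`X₁ = δηγ`, `X₂ = ρωβ`, `X₃ = ανμ`, `X₄ = γδη`, `X₅ = ηγδ`, `X₆ = ωβρ`. -/
def X : Fin 6 → Tet K m lam
  | 0 => a K m lam de * a K m lam et * a K m lam ga
  | 1 => a K m lam rh * a K m lam om * a K m lam be
  | 2 => a K m lam al * a K m lam nu * a K m lam mu
  | 3 => a K m lam ga * a K m lam de * a K m lam et
  | 4 => a K m lam et * a K m lam ga * a K m lam de
  | 5 => a K m lam om * a K m lam be * a K m lam rh

/-- Product in `Λ(m,λ)` of a list of arrows (a path, read left to right). -/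
def pathProd (l : List Arr) : Tet K m lam := (l.map (a K m lam)).prod

/-- `IsPath i j l` : the list of arrows `l` is a (composable) path from vertex `i`
to vertex `j`. -/
def IsPath (i j : Fin 6) (l : List Arr) : Prop :=
  l ≠ [] ∧ l.Chain' (fun x y => tgt x = src y) ∧
    (∀ h : l ≠ [], src (l.head h) = i ∧ tgt (l.getLast h) = j)

end HigherTetrahedral


namespace HigherTetrahedral

/-- The vertex permutation `(5 4 2)(1 6 3)` (vertex `v` is `⟨v-1⟩ : Fin 6`). -/
def vperm : Fin 6 → Fin 6
  | 0 => 5 | 1 => 4 | 2 => 0 | 3 => 1 | 4 => 3 | 5 => 2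

open Arr in
/-- The arrow permutation `(δ ω σ)(η β ε)(γ ρ ξ)(ν μ α)`. -/
def aperm : Arr → Arr
  | de => om | om => si | si => de
  | et => be | be => ep | ep => et
  | ga => rh | rh => xi | xi => ga
  | nu => mu | mu => al | al => nu

end HigherTetrahedral

/-
The vertex and arrow permutations commute with `src`, `tgt`, `f` and `g`, and they permute the
three `λ`-deformed relations cyclically (`γδ ↦ ρω ↦ ξσ ↦ γδ`). Hence renaming the generators of
the free algebra maps the defining relations of `Λ(m,λ)` onto defining relations, and descends
to an endomorphism `φ` of `Λ(m,λ)`. Both permutations have order three, so `φ³` fixes every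
generator and `φ³ = 1`; and `φ ≠ 1` because it sends `e₁` to `e₆`, which are distinct already
in `Λ(m,λ)/rad Λ(m,λ) ≅ K⁶`.
-/

namespace HigherTetrahedral

variable (K : Type) [Field K] (m : ℕ) (lam : K)

lemma vperm_bijective : Function.Bijective vperm := by decide

lemma vperm_vperm_vperm (i : Fin 6) : vperm (vperm (vperm i)) = i := by revert i; decide

lemma aperm_aperm_aperm (θ : Arr) : aperm (aperm (aperm θ)) = θ := by revert θ; decide

lemma src_aperm (θ : Arr) : src (aperm θ) = vperm (src θ) := by revert θ; decide

lemma tgt_aperm (θ : Arr) : tgt (aperm θ) = vperm (tgt θ) := by revert θ; decide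

lemma aperm_f (θ : Arr) : aperm (f θ) = f (aperm θ) := by revert θ; decide

lemma aperm_g (θ : Arr) : aperm (g θ) = g (aperm θ) := by revert θ; decide

noncomputable def rename : FreeTet K →ₐ[K] FreeTet K :=
  FreeAlgebra.lift K (FreeAlgebra.ι K ∘ Sum.map vperm aperm)

@[simp]
lemma rename_V (i : Fin 6) : rename K (V K i) = V K (vperm i) :=
  FreeAlgebra.lift_ι_apply _ _

@[simp]
lemma rename_A (θ : Arr) : rename K (A K θ) = A K (aperm θ) :=
  FreeAlgebra.lift_ι_apply _ _

variable {K m lam} in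
lemma TetRel.rename {x y : FreeTet K} (h : TetRel K m lam x y) :
    TetRel K m lam (rename K x) (rename K y) := by
  cases h
  case idem i j =>
    convert TetRel.idem (vperm i) (vperm j) using 1
    · simp
    · by_cases hij : i = j <;> simp [hij, vperm_bijective.injective.eq_iff]
  case sum_one =>
    convert TetRel.sum_one (K := K) (m := m) (lam := lam) using 1 <;>
      simp [vperm_bijective.sum_comp (V K)]
  case src_tgt θ =>
    convert TetRel.src_tgt (K := K) (m := m) (lam := lam) (aperm θ) using 1 <;>
      simp [src_aperm, tgt_aperm]
  case zero_rel θ =>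
    convert TetRel.zero_rel (K := K) (m := m) (lam := lam) (aperm θ) using 1 <;>
      simp [aperm_f, aperm_g]
  all_goals simp only [map_mul, map_add, map_smul, map_pow, rename_A]; constructor

noncomputable def rotation : Tet K m lam →ₐ[K] Tet K m lam :=
  RingQuot.liftAlgHom K
    ⟨(RingQuot.mkAlgHom K (TetRel K m lam)).comp (rename K),
      fun _ _ h => RingQuot.mkAlgHom_rel K h.rename⟩

lemma rotation_mkAlgHom (x : FreeTet K) :
    rotation K m lam (RingQuot.mkAlgHom K _ x) = RingQuot.mkAlgHom K _ (rename K x) :=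
  RingQuot.liftAlgHom_mkAlgHom_apply _ _ _ _

lemma rotation_e (i : Fin 6) : rotation K m lam (e K m lam i) = e K m lam (vperm i) := by
  simp [e, rotation_mkAlgHom]

lemma rotation_a (θ : Arr) : rotation K m lam (a K m lam θ) = a K m lam (aperm θ) := by
  simp [a, rotation_mkAlgHom]

variable {K m lam} in
lemma Tet.algHom_ext {B : Type*} [Semiring B] [Algebra K B] {φ ψ : Tet K m lam →ₐ[K] B}
    (he : ∀ i, φ (e K m lam i) = ψ (e K m lam i))
    (ha : ∀ θ, φ (a K m lam θ) = ψ (a K m lam θ)) : φ = ψ := by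
  apply RingQuot.ringQuot_ext'
  apply FreeAlgebra.hom_ext
  funext x
  cases x with
  | inl i => exact he i
  | inr θ => exact ha θ

lemma rotation_pow_three : rotation K m lam ^ 3 = 1 :=
  Tet.algHom_ext (fun i => by simp [rotation_e, vperm_vperm_vperm])
    (fun θ => by simp [rotation_a, aperm_aperm_aperm])

/-- The quotient map `Λ(m,λ) → Λ(m,λ)/rad Λ(m,λ) ≅ K⁶`, killing all arrows. -/
noncomputable def augmentation : Tet K m lam →ₐ[K] (Fin 6 → K) :=
  RingQuot.liftAlgHom K ⟨FreeAlgebra.lift K (Sum.elim (Pi.single · 1) 0), by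
    intro x y h
    cases h
    case idem i j =>
      ext k
      simp only [V, map_mul, FreeAlgebra.lift_ι_apply, Sum.elim_inl, Pi.mul_apply,
        Pi.single_apply]
      split_ifs <;> simp_all
    case sum_one => simp [V, Finset.univ_sum_single, Pi.one_def]
    all_goals simp [A]⟩

lemma augmentation_e (i : Fin 6) : augmentation K m lam (e K m lam i) = Pi.single i 1 := by
  rw [augmentation, e, RingQuot.liftAlgHom_mkAlgHom_apply]
  simp [V]

lemma e_injective : Function.Injective (e K m lam) := fun i j h => by
  simpa [augmentation_e, Pi.single_apply] using congr_fun (congrArg (augmentation K m lam) h) i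

lemma rotation_ne_one : rotation K m lam ≠ 1 := fun h => by
  have h0 := rotation_e K m lam 0
  rw [h] at h0
  exact absurd (e_injective K m lam h0) (by decide)

end HigherTetrahedral

open HigherTetrahedral Arr in
theorem exists_automorphism_order_three_general (K : Type) [Field K] (m : ℕ) (lam : K) :
    ∃ φ : Tet K m lam ≃ₐ[K] Tet K m lam,
      (∀ i : Fin 6, φ (e K m lam i) = e K m lam (vperm i)) ∧
      (∀ θ : Arr, φ (a K m lam θ) = a K m lam (aperm θ)) ∧
      orderOf φ = 3 := by
  have : Fact (Nat.Prime 3) := ⟨Nat.prime_three⟩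
  let u := Units.ofPowEqOne _ 3 (rotation_pow_three K m lam) (by norm_num)
  refine ⟨AlgEquiv.algHomUnitsEquiv K _ u, rotation_e K m lam, rotation_a K m lam, ?_⟩
  rw [MulEquiv.orderOf_eq, ← orderOf_units]
  exact orderOf_eq_prime (rotation_pow_three K m lam) (rotation_ne_one K m lam)

open HigherTetrahedral Arr in
/-- The assignment on vertices given by `(5 4 2)(1 6 3)` and on arrows by
`(δ ω σ)(η β ε)(γ ρ ξ)(ν μ α)` extends to a `K`-algebra automorphism `φ` of
`Λ(m,λ)` of order `3`. -/
theorem exists_automorphism_order_three (K : Type) [Field K] (m : ℕ) (hm : 2 ≤ m) (lam : K) :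
    ∃ φ : Tet K m lam ≃ₐ[K] Tet K m lam,
      (∀ i : Fin 6, φ (e K m lam i) = e K m lam (vperm i)) ∧
      (∀ θ : Arr, φ (a K m lam θ) = a K m lam (aperm θ)) ∧
      orderOf φ = 3 :=
  exists_automorphism_order_three_general K m lam
end

section
/- For each t ∈ K \ {0}, the algebra Σ(m,t) is isomorphic to Σ(m,1); explicitly, choosing b_t ∈ K with b_t^8 = t, the map sending ε ↦ t^{−1}ε, η ↦ t^{−1}η, μ ↦ t^{−1}μ, and θ ↦ b_t·θ for θ ∈ {α, β, γ, σ, ω, δ} extends to an algebra isomorphism Σ(m,1) → Σ(m,t). -/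
open scoped TensorProduct

namespace SigmaAlg

/-- The six vertices `a, b, c, x, y, z` of the quiver of `Σ(m,t)`. -/
inductive SV : Type
  | va | vb | vc | vx | vy | vz
  deriving DecidableEq

instance instFintypeSV : Fintype SV :=
  ⟨⟨[SV.va, SV.vb, SV.vc, SV.vx, SV.vy, SV.vz], by decide⟩, fun x => by cases x <;> decide⟩

/-- The nine arrows of the quiver of `Σ(m,t)`:
`α:x→a, δ:a→z, ω:z→c, σ:c→y, γ:y→b, β:b→x` and loops `ε` at `x`, `η` at `y`,
`μ` at `z`. -/
inductive SArr : Type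
  | sa | sd | sw | ss | sg | sb | se | sh | sm
  deriving DecidableEq

instance instFintypeSArr : Fintype SArr :=
  ⟨⟨[SArr.sa, SArr.sd, SArr.sw, SArr.ss, SArr.sg, SArr.sb, SArr.se, SArr.sh, SArr.sm], by decide⟩,
    fun x => by cases x <;> decide⟩

open SV SArr

/-- Source vertex. -/
def ssrc : SArr → SV
  | sa => vx | sd => va | sw => vz | ss => vc | sg => vy | sb => vb
  | se => vx | sh => vy | sm => vz

/-- Target vertex. -/
def stgt : SArr → SV
  | sa => va | sd => vz | sw => vc | ss => vy | sg => vb | sb => vx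
  | se => vx | sh => vy | sm => vz

variable (K : Type) [Field K]

/-- Ambient free algebra of `Σ(m,t)`. -/
abbrev FreeSig := FreeAlgebra K (SV ⊕ SArr)

/-- Vertex generator. -/
def SVgen (i : SV) : FreeSig K := FreeAlgebra.ι K (Sum.inl i)

/-- Arrow generator. -/
def SA (θ : SArr) : FreeSig K := FreeAlgebra.ι K (Sum.inr θ)

/-- Product of a list of arrows (a path read left to right). -/
def SW (l : List SArr) : FreeSig K := (l.map (SA K)).prod

variable (m : ℕ) (t : K)

/-- The defining relations of `Σ(m,t)`. -/
inductive SigRel : FreeSig K → FreeSig K → Prop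
  | idem (i j : SV) : SigRel (SVgen K i * SVgen K j) (if i = j then SVgen K i else 0)
  | sum_one : SigRel (∑ i : SV, SVgen K i) 1
  | src_tgt (θ : SArr) : SigRel (SVgen K (ssrc θ) * SA K θ * SVgen K (stgt θ)) (SA K θ)
  | rel_ba : SigRel (SW K [sb, sa]) 0
  | rel_sg : SigRel (SW K [ss, sg]) 0
  | rel_dw : SigRel (SW K [sd, sw]) 0
  | rel_ee : SigRel (SA K se * SA K se) (t • SA K se)
  | rel_hh : SigRel (SA K sh * SA K sh) (t • SA K sh)
  | rel_mm : SigRel (SA K sm * SA K sm) (t • SA K sm)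
  | rel_e1 : SigRel (t • SW K [sa, sd, sm, sw, ss, sh, sg, sb, se] ^ m)
      (SA K se * SW K [sa, sd, sm, sw, ss, sh, sg, sb, se] ^ m)
  | rel_e2 : SigRel (t • SW K [se, sa, sd, sm, sw, ss, sh, sg, sb] ^ m)
      (SW K [se, sa, sd, sm, sw, ss, sh, sg, sb] ^ m * SA K se)
  | rel_h1 : SigRel (t • SW K [sg, sb, se, sa, sd, sm, sw, ss, sh] ^ m)
      (SA K sh * SW K [sg, sb, se, sa, sd, sm, sw, ss, sh] ^ m)
  | rel_h2 : SigRel (t • SW K [sh, sg, sb, se, sa, sd, sm, sw, ss] ^ m)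
      (SW K [sh, sg, sb, se, sa, sd, sm, sw, ss] ^ m * SA K sh)
  | rel_m1 : SigRel (t • SW K [sw, ss, sh, sg, sb, se, sa, sd, sm] ^ m)
      (SA K sm * SW K [sw, ss, sh, sg, sb, se, sa, sd, sm] ^ m)
  | rel_m2 : SigRel (t • SW K [sm, sw, ss, sh, sg, sb, se, sa, sd] ^ m)
      (SW K [sm, sw, ss, sh, sg, sb, se, sa, sd] ^ m * SA K sm)
  | rel_c1 : SigRel (SW K [sa, sd, sm, sw, ss, sh, sg, sb, se] ^ m)
      (SW K [se, sa, sd, sm, sw, ss, sh, sg, sb] ^ m)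
  | rel_c2 : SigRel (SW K [sg, sb, se, sa, sd, sm, sw, ss, sh] ^ m)
      (SW K [sh, sg, sb, se, sa, sd, sm, sw, ss] ^ m)
  | rel_c3 : SigRel (SW K [sw, ss, sh, sg, sb, se, sa, sd, sm] ^ m)
      (SW K [sm, sw, ss, sh, sg, sb, se, sa, sd] ^ m)
  | rel_z1 : SigRel (SW K [sd, sm, sw, ss, sh, sg, sb, se, sa] ^ m * SA K sd) 0
  | rel_z2 : SigRel (SA K sa * SW K [sd, sm, sw, ss, sh, sg, sb, se, sa] ^ m) 0
  | rel_z3 : SigRel (SW K [sb, se, sa, sd, sm, sw, ss, sh, sg] ^ m * SA K sb) 0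
  | rel_z4 : SigRel (SA K sg * SW K [sb, se, sa, sd, sm, sw, ss, sh, sg] ^ m) 0
  | rel_z5 : SigRel (SW K [ss, sh, sg, sb, se, sa, sd, sm, sw] ^ m * SA K ss) 0
  | rel_z6 : SigRel (SA K sw * SW K [ss, sh, sg, sb, se, sa, sd, sm, sw] ^ m) 0

/-- The algebra `Σ(m,t)`. -/
abbrev Sig := RingQuot (SigRel K m t)

/-- Vertex idempotent of `Σ(m,t)`. -/
def sf (i : SV) : Sig K m t := RingQuot.mkAlgHom K (SigRel K m t) (SVgen K i)

/-- Arrow of `Σ(m,t)`. -/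
def sarr (θ : SArr) : Sig K m t := RingQuot.mkAlgHom K (SigRel K m t) (SA K θ)

end SigmaAlg

/-!
Multiplying every loop by `u` and every other arrow by `v` respects the relations of `Σ(m,t₁)`
inside `Σ(m,t₂)` as soon as `t₁ = u * t₂`: the relations not involving `t` are homogeneous both in
the loops and in the other arrows, and in each relation involving `t` the side carrying `t` has
exactly one loop fewer than the other side. These rescalings compose by multiplying the weights,
so for `u, v ≠ 0` they are isomorphisms; the theorem is the case `u = t⁻¹`, `v = b_t`.
-/

namespace RingQuot

variable {R A : Type*} [CommSemiring R] [Semiring A] [Algebra R A] {s : A → A → Prop}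
  {x y : A} {c d : R}

theorem smul_mkAlgHom_eq_zero_of_rel (r : s x 0) : c • mkAlgHom R s x = 0 := by
  rw [mkAlgHom_rel R r, map_zero, smul_zero]

theorem smul_mkAlgHom_congr_of_rel (r : s x y) (h : c = d) :
    c • mkAlgHom R s x = d • mkAlgHom R s y := by
  rw [mkAlgHom_rel R r, h]

theorem smul_mkAlgHom_congr_of_rel_smul_left {a : R} (r : s (a • x) y) (h : c = a * d) :
    c • mkAlgHom R s x = d • mkAlgHom R s y := by
  rw [← mkAlgHom_rel R r, map_smul, smul_smul, h, mul_comm]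

theorem smul_mkAlgHom_congr_of_rel_smul_right {a : R} (r : s x (a • y)) (h : c * a = d) :
    c • mkAlgHom R s x = d • mkAlgHom R s y := by
  rw [mkAlgHom_rel R r, map_smul, smul_smul, h]

end RingQuot

namespace SigmaAlg

open SV SArr

variable {K : Type} [Field K] {m : ℕ} {t t₁ t₂ t₃ : K}

theorem Sig.algHom_ext {A : Type*} [Semiring A] [Algebra K A] {f g : Sig K m t →ₐ[K] A}
    (hv : ∀ i, f (sf K m t i) = g (sf K m t i)) (ha : ∀ θ, f (sarr K m t θ) = g (sarr K m t θ)) :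
    f = g :=
  RingQuot.ringQuot_ext' K _ _ (FreeAlgebra.hom_ext (funext (Sum.rec hv ha)))

def arrowWeight (u v : K) : SArr → K
  | se | sh | sm => u
  | sa | sd | sw | ss | sg | sb => v

theorem arrowWeight_mul (u v u' v' : K) (θ : SArr) :
    arrowWeight u v θ * arrowWeight u' v' θ = arrowWeight (u * u') (v * v') θ := by
  cases θ <;> rfl

theorem arrowWeight_one_one (θ : SArr) : arrowWeight (1 : K) 1 θ = 1 := by
  cases θ <;> rfl

variable (m) in
noncomputable def scaleLift (u v t : K) : FreeSig K →ₐ[K] Sig K m t :=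
  FreeAlgebra.lift K (Sum.elim (sf K m t) fun θ => arrowWeight u v θ • sarr K m t θ)

@[simp] theorem scaleLift_SVgen (u v t : K) (i : SV) :
    scaleLift m u v t (SVgen K i) = RingQuot.mkAlgHom K (SigRel K m t) (SVgen K i) := by
  simp [scaleLift, SVgen, sf]

@[simp] theorem scaleLift_SA (u v t : K) (θ : SArr) :
    scaleLift m u v t (SA K θ) =
      arrowWeight u v θ • RingQuot.mkAlgHom K (SigRel K m t) (SA K θ) := by
  simp [scaleLift, SA, sarr]

@[simp] theorem scaleLift_SW (u v t : K) (l : List SArr) :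
    scaleLift m u v t (SW K l) =
      (l.map (arrowWeight u v)).prod • RingQuot.mkAlgHom K (SigRel K m t) (SW K l) := by
  induction l with
  | nil => simp [SW]
  | cons θ l ih =>
    simp only [SW, List.map_cons, List.prod_cons, map_mul] at ih ⊢
    rw [ih, scaleLift_SA, smul_mul_smul_comm]

open RingQuot in
theorem scaleLift_rel {u v : K} (h : t₁ = u * t₂) {x y : FreeSig K}
    (r : SigRel K m t₁ x y) : scaleLift m u v t₂ x = scaleLift m u v t₂ y := by
  subst h
  induction r
  all_goals
    simp only [map_mul, map_smul, map_pow, map_zero, map_sum, map_one, scaleLift_SW,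
      scaleLift_SA, scaleLift_SVgen, smul_pow, smul_smul, mul_smul_comm, smul_mul_assoc]
    try simp only [← map_pow, ← map_mul, ← map_sum]
  -- Each side is now a scalar multiple of the image of a monomial, and the relation of
  -- `Σ(m,t₂)` between these monomials is found by `constructor`.
  case idem i j =>
    have r₂ := mkAlgHom_rel K (SigRel.idem (m := m) (t := t₂) i j)
    split_ifs at r₂ ⊢ <;> simpa using r₂
  case sum_one => exact (mkAlgHom_rel K .sum_one).trans (map_one _)
  case rel_ba | rel_sg | rel_dw | rel_z1 | rel_z2 | rel_z3 | rel_z4 | rel_z5 | rel_z6 =>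
    exact smul_mkAlgHom_eq_zero_of_rel (by constructor)
  case src_tgt => exact smul_mkAlgHom_congr_of_rel (by constructor) rfl
  case rel_c1 | rel_c2 | rel_c3 =>
    exact smul_mkAlgHom_congr_of_rel (by constructor) (by simp [arrowWeight]; ring)
  case rel_ee | rel_hh | rel_mm =>
    exact smul_mkAlgHom_congr_of_rel_smul_right (by constructor)
      (by simp only [arrowWeight]; ring)
  case rel_e1 | rel_e2 | rel_h1 | rel_h2 | rel_m1 | rel_m2 =>
    exact smul_mkAlgHom_congr_of_rel_smul_left (by constructor) (by simp [arrowWeight]; ring)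

variable (m) in
noncomputable def scaleHom (u v : K) (h : t₁ = u * t₂) : Sig K m t₁ →ₐ[K] Sig K m t₂ :=
  RingQuot.liftAlgHom K ⟨scaleLift m u v t₂, fun _ _ r => scaleLift_rel h r⟩

@[simp] theorem scaleHom_sf {u v : K} (h : t₁ = u * t₂) (i : SV) :
    scaleHom m u v h (sf K m t₁ i) = sf K m t₂ i := by
  simp [scaleHom, sf]

@[simp] theorem scaleHom_sarr {u v : K} (h : t₁ = u * t₂) (θ : SArr) :
    scaleHom m u v h (sarr K m t₁ θ) = arrowWeight u v θ • sarr K m t₂ θ := by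
  simp [scaleHom, sarr]

theorem scaleHom_comp_scaleHom {u v u' v' : K} (h₁₂ : t₁ = u * t₂) (h₂₃ : t₂ = u' * t₃) :
    (scaleHom m u' v' h₂₃).comp (scaleHom m u v h₁₂) =
      scaleHom m (u * u') (v * v') (by rw [h₁₂, h₂₃, mul_assoc]) :=
  Sig.algHom_ext (by simp) (by simp [smul_smul, arrowWeight_mul])

theorem scaleHom_eq_id {u v : K} (hu : u = 1) (hv : v = 1) (h : t = u * t) :
    scaleHom m u v h = AlgHom.id K (Sig K m t) := by
  subst hu hv
  exact Sig.algHom_ext (by simp) (by simp [arrowWeight_one_one])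

variable (m) in
noncomputable def scaleEquiv {u v : K} (hu : u ≠ 0) (hv : v ≠ 0) (h : t₁ = u * t₂) :
    Sig K m t₁ ≃ₐ[K] Sig K m t₂ :=
  have h' : t₂ = u⁻¹ * t₁ := by rw [h, inv_mul_cancel_left₀ hu]
  AlgEquiv.ofAlgHom (scaleHom m u v h) (scaleHom m u⁻¹ v⁻¹ h')
    ((scaleHom_comp_scaleHom h' h).trans
      (scaleHom_eq_id (inv_mul_cancel₀ hu) (inv_mul_cancel₀ hv) _))
    ((scaleHom_comp_scaleHom h h').trans
      (scaleHom_eq_id (mul_inv_cancel₀ hu) (mul_inv_cancel₀ hv) _))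

end SigmaAlg

open SigmaAlg SV SArr in
theorem sigma_iso_general (K : Type) [Field K] (m : ℕ) (t : K) (ht : t ≠ 0)
    (bt : K) (hbt : bt ^ 8 = t) :
    ∃ φ : Sig K m 1 ≃ₐ[K] Sig K m t,
      (∀ i : SV, φ (sf K m 1 i) = sf K m t i) ∧
      φ (sarr K m 1 se) = t⁻¹ • sarr K m t se ∧
      φ (sarr K m 1 sh) = t⁻¹ • sarr K m t sh ∧
      φ (sarr K m 1 sm) = t⁻¹ • sarr K m t sm ∧
      φ (sarr K m 1 sa) = bt • sarr K m t sa ∧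
      φ (sarr K m 1 sb) = bt • sarr K m t sb ∧
      φ (sarr K m 1 sg) = bt • sarr K m t sg ∧
      φ (sarr K m 1 ss) = bt • sarr K m t ss ∧
      φ (sarr K m 1 sw) = bt • sarr K m t sw ∧
      φ (sarr K m 1 sd) = bt • sarr K m t sd := by
  have hbt₀ : bt ≠ 0 := by
    rintro rfl
    exact ht (by simpa using hbt.symm)
  refine ⟨scaleEquiv m (inv_ne_zero ht) hbt₀ (inv_mul_cancel₀ ht).symm,
    fun i => scaleHom_sf _ i, ?_, ?_, ?_, ?_, ?_, ?_, ?_, ?_, ?_⟩ <;>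
  exact scaleHom_sarr _ _

open SigmaAlg SV SArr in
/-- For `t ≠ 0`, `Σ(m,t) ≅ Σ(m,1)`: choosing `b_t` with `b_t⁸ = t`, the map sending
`ε ↦ t⁻¹ε`, `η ↦ t⁻¹η`, `μ ↦ t⁻¹μ` and `θ ↦ b_t·θ` for the six other arrows
(fixing the vertex idempotents) extends to an algebra isomorphism
`Σ(m,1) → Σ(m,t)`. -/
theorem sigma_iso (K : Type) [Field K] (m : ℕ) (hm : 2 ≤ m) (t : K) (ht : t ≠ 0)
    (bt : K) (hbt : bt ^ 8 = t) :
    ∃ φ : Sig K m 1 ≃ₐ[K] Sig K m t,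
      (∀ i : SV, φ (sf K m 1 i) = sf K m t i) ∧
      φ (sarr K m 1 se) = t⁻¹ • sarr K m t se ∧
      φ (sarr K m 1 sh) = t⁻¹ • sarr K m t sh ∧
      φ (sarr K m 1 sm) = t⁻¹ • sarr K m t sm ∧
      φ (sarr K m 1 sa) = bt • sarr K m t sa ∧
      φ (sarr K m 1 sb) = bt • sarr K m t sb ∧
      φ (sarr K m 1 sg) = bt • sarr K m t sg ∧
      φ (sarr K m 1 ss) = bt • sarr K m t ss ∧
      φ (sarr K m 1 sw) = bt • sarr K m t sw ∧
      φ (sarr K m 1 sd) = bt • sarr K m t sd :=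
  sigma_iso_general K m t ht bt hbt
end
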